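/- Let U ⊆ (0,π)×(0,π) be open and let u, Q : U → ℝ be smooth functions satisfying the Gowdy equations (G1) and (G2) on U. Define f := Q² e^u sin²t + e^{−u} sin²θ (which is strictly positive) and a := Q e^u sin²t / f, and suppose b : U → ℝ is a C² function satisfying ∂θb = (f²/(sin t sin θ)) ∂ₜa and ∂ₜb = (f²/(sin t sin θ)) ∂θa on U. Then the complex function ℰ := f + i b satisfies the Ernst equation f·(−∂ₜ²ℰ − cot t·∂ₜℰ + ∂θ²ℰ + cot θ·∂θℰ) = −(∂ₜℰ)² + (∂θℰ)² on U. -/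

import Mathlib

noncomputable section

open Real Set

/-- Partial derivative with respect to the first (time) variable. -/
def pt (f : ℝ → ℝ → ℝ) (t θ : ℝ) : ℝ := deriv (fun s => f s θ) t

/-- Partial derivative with respect to the second (angle) variable. -/
def pth (f : ℝ → ℝ → ℝ) (t θ : ℝ) : ℝ := deriv (fun x => f t x) θ

/-- The Fuchsian operator `D = t ∂ₜ`. -/
def Dt (f : ℝ → ℝ → ℝ) : ℝ → ℝ → ℝ := fun t θ => t * pt f t θ

/-- The Gowdy equation (G1) for `(u, Q)`. -/
def GowdyG1 (u Q : ℝ → ℝ → ℝ) (t θ : ℝ) : Prop :=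
  -pt (pt u) t θ - Real.cot t * pt u t θ + pth (pth u) t θ + Real.cot θ * pth u t θ
    + Real.exp (2 * u t θ) * (Real.sin t ^ 2 / Real.sin θ ^ 2) *
        ((pt Q t θ) ^ 2 - (pth Q t θ) ^ 2) + 2 = 0

/-- The Gowdy equation (G2) for `(u, Q)`. -/
def GowdyG2 (u Q : ℝ → ℝ → ℝ) (t θ : ℝ) : Prop :=
  -pt (pt Q) t θ - 3 * Real.cot t * pt Q t θ + pth (pth Q) t θ - Real.cot θ * pth Q t θ
    - 2 * (pt u t θ * pt Q t θ - pth u t θ * pth Q t θ) = 0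

/-- Partial `t`-derivative of a complex-valued function of `(t, θ)`. -/
def ptc (F : ℝ → ℝ → ℂ) (t θ : ℝ) : ℂ := deriv (fun s => F s θ) t

/-- Partial `θ`-derivative of a complex-valued function of `(t, θ)`. -/
def pthc (F : ℝ → ℝ → ℂ) (t θ : ℝ) : ℂ := deriv (fun x => F t x) θ

/-- The Ernst equation for a complex potential `E` with `f = Re E`. -/
def ErnstEq (E : ℝ → ℝ → ℂ) (t θ : ℝ) : Prop :=
  ((E t θ).re : ℂ) *
      (-(ptc (ptc E) t θ) - (Real.cot t : ℂ) * ptc E t θ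
        + pthc (pthc E) t θ + (Real.cot θ : ℂ) * pthc E t θ)
    = -(ptc E t θ) ^ 2 + (pthc E t θ) ^ 2

/-- `f = Q² e^u sin²t + e^{-u} sin²θ`. -/
def fG (u Q : ℝ → ℝ → ℝ) (t θ : ℝ) : ℝ :=
  (Q t θ) ^ 2 * Real.exp (u t θ) * Real.sin t ^ 2 + Real.exp (-(u t θ)) * Real.sin θ ^ 2

/-- `a = Q e^u sin²t / f`. -/
def aG (u Q : ℝ → ℝ → ℝ) (t θ : ℝ) : ℝ :=
  Q t θ * Real.exp (u t θ) * Real.sin t ^ 2 / fG u Q t θ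

/-- The Ernst potential `ℰ = f + i b`. -/
def EE (u Q b : ℝ → ℝ → ℝ) (t θ : ℝ) : ℂ :=
  (fG u Q t θ : ℂ) + Complex.I * (b t θ : ℂ)

section Aux
variable {U : Set (ℝ × ℝ)} {f : ℝ → ℝ → ℝ} {n : WithTop ℕ∞} {t θ : ℝ}

lemma evEq_t {α : Type*} (hU : IsOpen U) (hp : (t, θ) ∈ U)
    (g h : ℝ → ℝ → α) (H : ∀ q ∈ U, g q.1 q.2 = h q.1 q.2) :
    (fun s => g s θ) =ᶠ[nhds t] (fun s => h s θ) := by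
  have ho : IsOpen {s : ℝ | (s, θ) ∈ U} :=
    hU.preimage (Continuous.prodMk continuous_id continuous_const)
  filter_upwards [ho.mem_nhds hp] with s hs
  exact H (s, θ) hs

lemma evEq_q {α : Type*} (hU : IsOpen U) (hp : (t, θ) ∈ U)
    (g h : ℝ → ℝ → α) (H : ∀ q ∈ U, g q.1 q.2 = h q.1 q.2) :
    (fun x => g t x) =ᶠ[nhds θ] (fun x => h t x) := by
  have ho : IsOpen {x : ℝ | (t, x) ∈ U} :=
    hU.preimage (Continuous.prodMk continuous_const continuous_id)
  filter_upwards [ho.mem_nhds hp] with x hx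
  exact H (t, x) hx

lemma hasDerivAt_pt (hU : IsOpen U) (hf : ContDiffOn ℝ n (Function.uncurry f) U)
    (hn : 1 ≤ n) (hp : (t, θ) ∈ U) :
    HasDerivAt (fun s => f s θ) (pt f t θ) t := by
  have hF : DifferentiableAt ℝ (Function.uncurry f) (t, θ) :=
    (hf.contDiffAt (hU.mem_nhds hp)).differentiableAt (zero_lt_one.trans_le hn).ne'
  have h1 : HasDerivAt (fun s : ℝ => (s, θ)) ((1 : ℝ), (0 : ℝ)) t :=
    (hasDerivAt_id t).prodMk (hasDerivAt_const t θ)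
  have h2 := hF.hasFDerivAt.comp_hasDerivAt t h1
  exact h2.differentiableAt.hasDerivAt

lemma hasDerivAt_pth (hU : IsOpen U) (hf : ContDiffOn ℝ n (Function.uncurry f) U)
    (hn : 1 ≤ n) (hp : (t, θ) ∈ U) :
    HasDerivAt (fun x => f t x) (pth f t θ) θ := by
  have hF : DifferentiableAt ℝ (Function.uncurry f) (t, θ) :=
    (hf.contDiffAt (hU.mem_nhds hp)).differentiableAt (zero_lt_one.trans_le hn).ne'
  have h1 : HasDerivAt (fun x : ℝ => (t, x)) ((0 : ℝ), (1 : ℝ)) θ :=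
    (hasDerivAt_const θ t).prodMk (hasDerivAt_id θ)
  have h2 := hF.hasFDerivAt.comp_hasDerivAt θ h1
  exact h2.differentiableAt.hasDerivAt

lemma pt_eq_fderiv (hU : IsOpen U) (hf : ContDiffOn ℝ n (Function.uncurry f) U)
    (hn : 1 ≤ n) (hp : (t, θ) ∈ U) :
    pt f t θ = fderiv ℝ (Function.uncurry f) (t, θ) (1, 0) := by
  have hF : DifferentiableAt ℝ (Function.uncurry f) (t, θ) :=
    (hf.contDiffAt (hU.mem_nhds hp)).differentiableAt (zero_lt_one.trans_le hn).ne'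
  have h1 : HasDerivAt (fun s : ℝ => (s, θ)) ((1 : ℝ), (0 : ℝ)) t :=
    (hasDerivAt_id t).prodMk (hasDerivAt_const t θ)
  exact (hF.hasFDerivAt.comp_hasDerivAt t h1).deriv

lemma pth_eq_fderiv (hU : IsOpen U) (hf : ContDiffOn ℝ n (Function.uncurry f) U)
    (hn : 1 ≤ n) (hp : (t, θ) ∈ U) :
    pth f t θ = fderiv ℝ (Function.uncurry f) (t, θ) (0, 1) := by
  have hF : DifferentiableAt ℝ (Function.uncurry f) (t, θ) :=
    (hf.contDiffAt (hU.mem_nhds hp)).differentiableAt (zero_lt_one.trans_le hn).ne'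
  have h1 : HasDerivAt (fun x : ℝ => (t, x)) ((0 : ℝ), (1 : ℝ)) θ :=
    (hasDerivAt_const θ t).prodMk (hasDerivAt_id θ)
  exact (hF.hasFDerivAt.comp_hasDerivAt θ h1).deriv

lemma contDiffOn_pt (hU : IsOpen U) (hf : ContDiffOn ℝ (⊤ : ℕ∞) (Function.uncurry f) U) :
    ContDiffOn ℝ (⊤ : ℕ∞) (Function.uncurry (pt f)) U := by
  have h1 : ContDiffOn ℝ (⊤ : ℕ∞) (fun q : ℝ × ℝ => fderiv ℝ (Function.uncurry f) q (1, 0)) U :=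
    (hf.fderiv_of_isOpen hU (by simp)).clm_apply contDiffOn_const
  exact h1.congr fun q hq => pt_eq_fderiv hU hf (by simp) hq

lemma contDiffOn_pth (hU : IsOpen U) (hf : ContDiffOn ℝ (⊤ : ℕ∞) (Function.uncurry f) U) :
    ContDiffOn ℝ (⊤ : ℕ∞) (Function.uncurry (pth f)) U := by
  have h1 : ContDiffOn ℝ (⊤ : ℕ∞) (fun q : ℝ × ℝ => fderiv ℝ (Function.uncurry f) q (0, 1)) U :=
    (hf.fderiv_of_isOpen hU (by simp)).clm_apply contDiffOn_const
  exact h1.congr fun q hq => pth_eq_fderiv hU hf (by simp) hq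

lemma pt_pth_symm (hU : IsOpen U) (hf : ContDiffOn ℝ (⊤ : ℕ∞) (Function.uncurry f) U)
    (hp : (t, θ) ∈ U) : pt (pth f) t θ = pth (pt f) t θ := by
  have hG : ContDiffOn ℝ (⊤ : ℕ∞) (fun q : ℝ × ℝ => fderiv ℝ (Function.uncurry f) q) U :=
    hf.fderiv_of_isOpen hU (by simp)
  have hGd : DifferentiableAt ℝ (fun q : ℝ × ℝ => fderiv ℝ (Function.uncurry f) q) (t, θ) :=
    (hG.contDiffAt (hU.mem_nhds hp)).differentiableAt (by simp)
  have hev : ∀ᶠ y in nhds (t, θ), HasFDerivAt (Function.uncurry f)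
      (fderiv ℝ (Function.uncurry f) y) y := by
    filter_upwards [hU.mem_nhds hp] with q hq
    exact ((hf.contDiffAt (hU.mem_nhds hq)).differentiableAt (by simp)).hasFDerivAt
  have hsym := second_derivative_symmetric_of_eventually hev hGd.hasFDerivAt
    ((1 : ℝ), (0 : ℝ)) ((0 : ℝ), (1 : ℝ))
  have h1 : HasDerivAt (fun s : ℝ => (s, θ)) ((1 : ℝ), (0 : ℝ)) t :=
    (hasDerivAt_id t).prodMk (hasDerivAt_const t θ)
  have h2 : HasDerivAt (fun x : ℝ => (t, x)) ((0 : ℝ), (1 : ℝ)) θ :=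
    (hasDerivAt_const θ t).prodMk (hasDerivAt_id θ)
  have hA : HasDerivAt (fun s => fderiv ℝ (Function.uncurry f) (s, θ))
      (fderiv ℝ (fun q : ℝ × ℝ => fderiv ℝ (Function.uncurry f) q) (t, θ) (1, 0)) t :=
    hGd.hasFDerivAt.comp_hasDerivAt t h1
  have hA2 : HasDerivAt (fun s => fderiv ℝ (Function.uncurry f) (s, θ) (0, 1))
      (fderiv ℝ (fun q : ℝ × ℝ => fderiv ℝ (Function.uncurry f) q) (t, θ) (1, 0) (0, 1)) t := by
    simpa using hA.clm_apply (hasDerivAt_const t ((0 : ℝ), (1 : ℝ)))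
  have hB : HasDerivAt (fun x => fderiv ℝ (Function.uncurry f) (t, x))
      (fderiv ℝ (fun q : ℝ × ℝ => fderiv ℝ (Function.uncurry f) q) (t, θ) (0, 1)) θ :=
    hGd.hasFDerivAt.comp_hasDerivAt θ h2
  have hB2 : HasDerivAt (fun x => fderiv ℝ (Function.uncurry f) (t, x) (1, 0))
      (fderiv ℝ (fun q : ℝ × ℝ => fderiv ℝ (Function.uncurry f) q) (t, θ) (0, 1) (1, 0)) θ := by
    simpa using hB.clm_apply (hasDerivAt_const θ ((1 : ℝ), (0 : ℝ)))
  have hevA : (fun s => pth f s θ) =ᶠ[nhds t]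
      (fun s => fderiv ℝ (Function.uncurry f) (s, θ) (0, 1)) :=
    evEq_t hU hp (pth f) (fun a b => fderiv ℝ (Function.uncurry f) (a, b) (0, 1))
      (fun q hq => pth_eq_fderiv hU hf (by simp) hq)
  have hevB : (fun x => pt f t x) =ᶠ[nhds θ]
      (fun x => fderiv ℝ (Function.uncurry f) (t, x) (1, 0)) :=
    evEq_q hU hp (pt f) (fun a b => fderiv ℝ (Function.uncurry f) (a, b) (1, 0))
      (fun q hq => pt_eq_fderiv hU hf (by simp) hq)
  have e1 : pt (pth f) t θ = _ := (hevA.hasDerivAt_iff.mpr hA2).deriv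
  have e2 : pth (pt f) t θ = _ := (hevB.hasDerivAt_iff.mpr hB2).deriv
  rw [e1, e2, hsym]

end Aux

set_option maxHeartbeats 2000000 in
lemma ernst_key (st ct sq cq sti sqi E Ei Q ut uq Qt Qq utt utq uqq Qtt Qtq Qqq f ft fq ftt fqq bt bq btt bqq : ℝ)
    (hst : st * sti = 1) (hsq : sq * sqi = 1) (hE : E * Ei = 1)
    (hf : f = sq^2*Ei + st^2*E*Q^2)
    (hft : ft = -sq^2*Ei*ut + 2*st*ct*E*Q^2 + 2*st^2*E*Q*Qt + st^2*E*Q^2*ut)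
    (hfq : fq = 2*sq*cq*Ei - sq^2*Ei*uq + 2*st^2*E*Q*Qq + st^2*E*Q^2*uq)
    (hftt : ftt = -sq^2*Ei*utt + sq^2*Ei*ut^2 + 2*ct^2*E*Q^2 + 8*st*ct*E*Q*Qt + 4*st*ct*E*Q^2*ut + 2*st^2*E*Qt^2 + 2*st^2*E*Q*Qtt + 4*st^2*E*Q*ut*Qt - 2*st^2*E*Q^2 + st^2*E*Q^2*utt + st^2*E*Q^2*ut^2)
    (hfqq : fqq = 2*cq^2*Ei - 4*sq*cq*Ei*uq - 2*sq^2*Ei - sq^2*Ei*uqq + sq^2*Ei*uq^2 + 2*st^2*E*Qq^2 + 2*st^2*E*Q*Qqq + 4*st^2*E*Q*uq*Qq + st^2*E*Q^2*uqq + st^2*E*Q^2*uq^2)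
    (hbt : bt = -2*st^2*sq*cq*sti*sqi*E*Ei*Q + st^2*sq^2*sti*sqi*E*Ei*Qq + 2*st^2*sq^2*sti*sqi*E*Ei*Q*uq - st^4*sti*sqi*E^2*Q^2*Qq)
    (hbq : bq = 2*st*ct*sq^2*sti*sqi*E*Ei*Q + st^2*sq^2*sti*sqi*E*Ei*Qt + 2*st^2*sq^2*sti*sqi*E*Ei*Q*ut - st^4*sti*sqi*E^2*Q^2*Qt)
    (hbtt : btt = -2*st^2*ct*sq^2*cq*sti^2*sqi^2*E*Ei*Q + st^2*ct*sq^3*sti^2*sqi^2*E*Ei*Qq + 2*st^2*ct*sq^3*sti^2*sqi^2*E*Ei*Q*uq - 2*st^3*sq^2*cq*sti^2*sqi^2*E*Ei*Qt + st^3*sq^3*sti^2*sqi^2*E*Ei*Qtq + 2*st^3*sq^3*sti^2*sqi^2*E*Ei*uq*Qt + 2*st^3*sq^3*sti^2*sqi^2*E*Ei*Q*utq - 3*st^4*ct*sq*sti^2*sqi^2*E^2*Q^2*Qq - 2*st^5*sq*sti^2*sqi^2*E^2*Q*Qt*Qq - st^5*sq*sti^2*sqi^2*E^2*Q^2*Qtq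 - 2*st^5*sq*sti^2*sqi^2*E^2*Q^2*ut*Qq)
    (hbqq : bqq = 2*st^2*ct*sq^2*cq*sti^2*sqi^2*E*Ei*Q + 2*st^2*ct*sq^3*sti^2*sqi^2*E*Ei*Qq + st^3*sq^2*cq*sti^2*sqi^2*E*Ei*Qt + 2*st^3*sq^2*cq*sti^2*sqi^2*E*Ei*Q*ut + st^3*sq^3*sti^2*sqi^2*E*Ei*Qtq + 2*st^3*sq^3*sti^2*sqi^2*E*Ei*ut*Qq + 2*st^3*sq^3*sti^2*sqi^2*E*Ei*Q*utq + st^5*cq*sti^2*sqi^2*E^2*Q^2*Qt - 2*st^5*sq*sti^2*sqi^2*E^2*Q*Qt*Qq - st^5*sq*sti^2*sqi^2*E^2*Q^2*Qtq - 2*st^5*sq*sti^2*sqi^2*E^2*Q^2*uq*Qt)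
    (hutt : utt = 2 + uqq + cq*sqi*uq - ct*sti*ut - st^2*sqi^2*E^2*Qq^2 + st^2*sqi^2*E^2*Qt^2)
    (hQtt : Qtt = Qqq + 2*uq*Qq - 2*ut*Qt - cq*sqi*Qq - 3*ct*sti*Qt)
    :
    f * (-ftt - ct*sti*ft + fqq + cq*sqi*fq) = -ft^2 + fq^2 + bt^2 - bq^2 ∧
    f * (-btt - ct*sti*bt + bqq + cq*sqi*bq) = -(2*(ft*bt)) + 2*(fq*bq) := by
  subst hf hft hfq hftt hfqq hbt hbq hbtt hbqq hutt hQtt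
  constructor
  · linear_combination (-2*ct^2*sq^2*E*Ei*Q^2 + 4*ct^2*sq^4*sqi^2*E^2*Ei^2*Q^2 + 4*st*ct*sq^2*E*Ei*Q*Qt + 4*st*ct*sq^4*sqi^2*E^2*Ei^2*Q*Qt + 8*st*ct*sq^4*sqi^2*E^2*Ei^2*Q^2*ut + 4*st*ct^2*sq^4*sti*sqi^2*E^2*Ei^2*Q^2 - 4*st^2*sq^2*cq^2*sqi^2*E^2*Ei^2*Q^2 + 4*st^2*sq^3*cq*sqi^2*E^2*Ei^2*Q*Qq + 8*st^2*sq^3*cq*sqi^2*E^2*Ei^2*Q^2*uq - st^2*sq^4*sqi^2*E^2*Ei^2*Qq^2 + st^2*sq^4*sqi^2*E^2*Ei^2*Qt^2 - 4*st^2*sq^4*sqi^2*E^2*Ei^2*Q*uq*Qq + 4*st^2*sq^4*sqi^2*E^2*Ei^2*Q*ut*Qt - 4*st^2*sq^4*sqi^2*E^2*Ei^2*Q^2*uq^2 + 4*st^2*sq^4*sqi^2*E^2*Ei^2*Q^2*ut^2 + 4*st^2*ct*sq^4*sti*sqi^2*E^2*Ei^2*Q*Qt + 8*st^2*ct*sq^4*sti*sqi^2*E^2*Ei^2*Q^2*ut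 - 2*st^2*ct^2*E^2*Q^4 - 4*st^3*sq^2*cq^2*sti*sqi^2*E^2*Ei^2*Q^2 + 4*st^3*sq^3*cq*sti*sqi^2*E^2*Ei^2*Q*Qq + 8*st^3*sq^3*cq*sti*sqi^2*E^2*Ei^2*Q^2*uq - st^3*sq^4*sti*sqi^2*E^2*Ei^2*Qq^2 + st^3*sq^4*sti*sqi^2*E^2*Ei^2*Qt^2 - 4*st^3*sq^4*sti*sqi^2*E^2*Ei^2*Q*uq*Qq + 4*st^3*sq^4*sti*sqi^2*E^2*Ei^2*Q*ut*Qt - 4*st^3*sq^4*sti*sqi^2*E^2*Ei^2*Q^2*uq^2 + 4*st^3*sq^4*sti*sqi^2*E^2*Ei^2*Q^2*ut^2 + 4*st^3*ct*E^2*Q^3*Qt - 4*st^3*ct*sq^2*sqi^2*E^3*Ei*Q^3*Qt - 4*st^4*sq*cq*sqi^2*E^3*Ei*Q^3*Qq + 2*st^4*sq^2*sqi^2*E^3*Ei*Q^2*Qq^2 - 2*st^4*sq^2*sqi^2*E^3*Ei*Q^2*Qt^2 + 4*st^4*sq^2*sqi^2*E^3*Ei*Q^3*uq*Qq - 4*st^4*sq^2*sqi^2*E^3*Ei*Q^3*ut*Qt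 - 4*st^4*ct*sq^2*sti*sqi^2*E^3*Ei*Q^3*Qt - 4*st^5*sq*cq*sti*sqi^2*E^3*Ei*Q^3*Qq + 2*st^5*sq^2*sti*sqi^2*E^3*Ei*Q^2*Qq^2 - 2*st^5*sq^2*sti*sqi^2*E^3*Ei*Q^2*Qt^2 + 4*st^5*sq^2*sti*sqi^2*E^3*Ei*Q^3*uq*Qq - 4*st^5*sq^2*sti*sqi^2*E^3*Ei*Q^3*ut*Qt - st^6*sqi^2*E^4*Q^4*Qq^2 + st^6*sqi^2*E^4*Q^4*Qt^2 - st^7*sti*sqi^2*E^4*Q^4*Qq^2 + st^7*sti*sqi^2*E^4*Q^4*Qt^2) * hst + (2*sq^2*cq^2*Ei^2 + 4*ct^2*sq^2*E^2*Ei^2*Q^2 + 4*ct^2*sq^3*sqi*E^2*Ei^2*Q^2 + 4*st*ct*sq^2*E^2*Ei^2*Q*Qt + 8*st*ct*sq^2*E^2*Ei^2*Q^2*ut + 4*st*ct*sq^3*sqi*E^2*Ei^2*Q*Qt + 8*st*ct*sq^3*sqi*E^2*Ei^2*Q^2*ut + 2*st^2*cq^2*E*Ei*Q^2 - 4*st^2*cq^2*E^2*Ei^2*Q^2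 + 4*st^2*sq*cq*E*Ei*Q*Qq + 4*st^2*sq*cq*E^2*Ei^2*Q*Qq + 8*st^2*sq*cq*E^2*Ei^2*Q^2*uq - 4*st^2*sq*cq^2*sqi*E^2*Ei^2*Q^2 - 2*st^2*sq^2*E^2*Ei^2*Qq^2 + 2*st^2*sq^2*E^2*Ei^2*Qt^2 - 4*st^2*sq^2*E^2*Ei^2*Q*uq*Qq + 4*st^2*sq^2*E^2*Ei^2*Q*ut*Qt - 4*st^2*sq^2*E^2*Ei^2*Q^2*uq^2 + 4*st^2*sq^2*E^2*Ei^2*Q^2*ut^2 + 4*st^2*sq^2*cq*sqi*E^2*Ei^2*Q*Qq + 8*st^2*sq^2*cq*sqi*E^2*Ei^2*Q^2*uq - 2*st^2*sq^3*sqi*E^2*Ei^2*Qq^2 + 2*st^2*sq^3*sqi*E^2*Ei^2*Qt^2 - 4*st^2*sq^3*sqi*E^2*Ei^2*Q*uq*Qq + 4*st^2*sq^3*sqi*E^2*Ei^2*Q*ut*Qt - 4*st^2*sq^3*sqi*E^2*Ei^2*Q^2*uq^2 + 4*st^2*sq^3*sqi*E^2*Ei^2*Q^2*ut^2 - 4*st^3*ct*E^3*Ei*Q^3*Qt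 - 4*st^3*ct*sq*sqi*E^3*Ei*Q^3*Qt + 2*st^4*E^3*Ei*Q^2*Qq^2 - 2*st^4*E^3*Ei*Q^2*Qt^2 + 4*st^4*E^3*Ei*Q^3*uq*Qq - 4*st^4*E^3*Ei*Q^3*ut*Qt - 4*st^4*cq*sqi*E^3*Ei*Q^3*Qq + 2*st^4*sq*sqi*E^3*Ei*Q^2*Qq^2 - 2*st^4*sq*sqi*E^3*Ei*Q^2*Qt^2 + 4*st^4*sq*sqi*E^3*Ei*Q^3*uq*Qq - 4*st^4*sq*sqi*E^3*Ei*Q^3*ut*Qt) * hsq + (4*ct^2*sq^2*E*Ei*Q^2 + 4*st*ct*sq^2*E*Ei*Q*Qt + 8*st*ct*sq^2*E*Ei*Q^2*ut - 4*st^2*cq^2*E*Ei*Q^2 + 4*st^2*sq*cq*E*Ei*Q*Qq + 8*st^2*sq*cq*E*Ei*Q^2*uq - 2*st^2*sq^2*E*Ei*Qq^2 + 2*st^2*sq^2*E*Ei*Qt^2 - 4*st^2*sq^2*E*Ei*Q*uq*Qq + 4*st^2*sq^2*E*Ei*Q*ut*Qt - 4*st^2*sq^2*E*Ei*Q^2*uq^2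 + 4*st^2*sq^2*E*Ei*Q^2*ut^2 - 4*st^3*ct*E^2*Q^3*Qt + 2*st^4*E^2*Q^2*Qq^2 - 2*st^4*E^2*Q^2*Qt^2 + 4*st^4*E^2*Q^3*uq*Qq - 4*st^4*E^2*Q^3*ut*Qt - 4*st^4*cq*sqi*E^2*Q^3*Qq) * hE
  · linear_combination (-6*ct*sq^3*cq*sqi*E*Ei^2*Q - ct*sq^4*sqi*E*Ei^2*Qq + 2*ct*sq^4*sqi*E*Ei^2*Q*uq + 6*ct*sq^4*cq*sqi^2*E*Ei^2*Q + ct*sq^5*sqi^2*E*Ei^2*Qq - 2*ct*sq^5*sqi^2*E*Ei^2*Q*uq - 4*st*sq^3*cq*sqi*E*Ei^2*Qt - 4*st*sq^3*cq*sqi*E*Ei^2*Q*ut + 2*st*sq^4*sqi*E*Ei^2*uq*Qt - 2*st*sq^4*sqi*E*Ei^2*ut*Qq + 4*st*sq^4*cq*sqi^2*E*Ei^2*Qt + 4*st*sq^4*cq*sqi^2*E*Ei^2*Q*ut - 2*st*sq^5*sqi^2*E*Ei^2*uq*Qt + 2*st*sq^5*sqi^2*E*Ei^2*ut*Qq + 2*st*ct*sq^3*cq*sti*sqi*E*Ei^2*Q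 - st*ct*sq^4*sti*sqi*E*Ei^2*Qq - 2*st*ct*sq^4*sti*sqi*E*Ei^2*Q*uq + 4*st*ct*sq^4*cq*sti*sqi^2*E*Ei^2*Q + st*ct*sq^5*sti*sqi^2*E*Ei^2*Qq - 2*st*ct*sq^5*sti*sqi^2*E*Ei^2*Q*uq + 3*st^2*sq^4*cq*sti*sqi^2*E*Ei^2*Qt + 2*st^2*sq^4*cq*sti*sqi^2*E*Ei^2*Q*ut - 2*st^2*sq^5*sti*sqi^2*E*Ei^2*uq*Qt + 2*st^2*sq^5*sti*sqi^2*E*Ei^2*ut*Qq - 6*st^2*ct*sq*cq*sqi*E^2*Ei*Q^3 - 4*st^2*ct*sq^2*sqi*E^2*Ei*Q^2*Qq + 2*st^2*ct*sq^2*sqi*E^2*Ei*Q^3*uq + 6*st^2*ct*sq^2*cq*sqi^2*E^2*Ei*Q^3 + 4*st^2*ct*sq^3*sqi^2*E^2*Ei*Q^2*Qq - 2*st^2*ct*sq^3*sqi^2*E^2*Ei*Q^3*uq - 4*st^3*sq*cq*sqi*E^2*Ei*Q^2*Qt - 4*st^3*sq*cq*sqi*E^2*Ei*Q^3*ut + 4*st^3*sq^2*sqi*E^2*Ei*Q^2*uq*Qt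 - 4*st^3*sq^2*sqi*E^2*Ei*Q^2*ut*Qq + 4*st^3*sq^2*cq*sqi^2*E^2*Ei*Q^2*Qt + 4*st^3*sq^2*cq*sqi^2*E^2*Ei*Q^3*ut - 4*st^3*sq^3*sqi^2*E^2*Ei*Q^2*uq*Qt + 4*st^3*sq^3*sqi^2*E^2*Ei*Q^2*ut*Qq + 2*st^3*ct*sq*cq*sti*sqi*E^2*Ei*Q^3 - 2*st^3*ct*sq^2*sti*sqi*E^2*Ei*Q^3*uq + 4*st^3*ct*sq^2*cq*sti*sqi^2*E^2*Ei*Q^3 + 4*st^3*ct*sq^3*sti*sqi^2*E^2*Ei*Q^2*Qq - 2*st^3*ct*sq^3*sti*sqi^2*E^2*Ei*Q^3*uq + 4*st^4*sq^2*cq*sti*sqi^2*E^2*Ei*Q^2*Qt + 2*st^4*sq^2*cq*sti*sqi^2*E^2*Ei*Q^3*ut - 4*st^4*sq^3*sti*sqi^2*E^2*Ei*Q^2*uq*Qt + 4*st^4*sq^3*sti*sqi^2*E^2*Ei*Q^2*ut*Qq - 3*st^4*ct*sqi*E^3*Q^4*Qq + 3*st^4*ct*sq*sqi^2*E^3*Q^4*Qq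 + 2*st^5*sqi*E^3*Q^4*uq*Qt - 2*st^5*sqi*E^3*Q^4*ut*Qq - 2*st^5*sq*sqi^2*E^3*Q^4*uq*Qt + 2*st^5*sq*sqi^2*E^3*Q^4*ut*Qq + st^5*ct*sti*sqi*E^3*Q^4*Qq + 3*st^5*ct*sq*sti*sqi^2*E^3*Q^4*Qq + st^6*cq*sti*sqi^2*E^3*Q^4*Qt - 2*st^6*sq*sti*sqi^2*E^3*Q^4*uq*Qt + 2*st^6*sq*sti*sqi^2*E^3*Q^4*ut*Qq) * hst + (6*ct*sq^3*cq*sqi*E*Ei^2*Q + ct*sq^4*sqi*E*Ei^2*Qq - 2*ct*sq^4*sqi*E*Ei^2*Q*uq + 4*st*sq^3*cq*sqi*E*Ei^2*Qt + 4*st*sq^3*cq*sqi*E*Ei^2*Q*ut - 2*st*sq^4*sqi*E*Ei^2*uq*Qt + 2*st*sq^4*sqi*E*Ei^2*ut*Qq + 6*st^2*ct*sq*cq*sqi*E^2*Ei*Q^3 + 4*st^2*ct*sq^2*sqi*E^2*Ei*Q^2*Qq - 2*st^2*ct*sq^2*sqi*E^2*Ei*Q^3*uq + 4*st^3*sq*cq*sqi*E^2*Ei*Q^2*Qt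 + 4*st^3*sq*cq*sqi*E^2*Ei*Q^3*ut - 4*st^3*sq^2*sqi*E^2*Ei*Q^2*uq*Qt + 4*st^3*sq^2*sqi*E^2*Ei*Q^2*ut*Qq + 3*st^4*ct*sqi*E^3*Q^4*Qq - 2*st^5*sqi*E^3*Q^4*uq*Qt + 2*st^5*sqi*E^3*Q^4*ut*Qq) * hsq + (0) * hE


set_option maxHeartbeats 4000000 in
/-- The Gowdy equations imply the Ernst equation for `ℰ = f + i b`. -/
theorem gowdy_implies_ernst
    (U : Set (ℝ × ℝ)) (hU : IsOpen U) (hUsub : U ⊆ Ioo (0 : ℝ) π ×ˢ Ioo (0 : ℝ) π)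
    (u Q : ℝ → ℝ → ℝ)
    (hu : ContDiffOn ℝ (⊤ : ℕ∞) (Function.uncurry u) U)
    (hQ : ContDiffOn ℝ (⊤ : ℕ∞) (Function.uncurry Q) U)
    (heq : ∀ p ∈ U, GowdyG1 u Q p.1 p.2 ∧ GowdyG2 u Q p.1 p.2)
    (b : ℝ → ℝ → ℝ) (hb : ContDiffOn ℝ 2 (Function.uncurry b) U)
    (hbeq : ∀ p ∈ U,
      pth b p.1 p.2
        = (fG u Q p.1 p.2) ^ 2 / (Real.sin p.1 * Real.sin p.2) * pt (aG u Q) p.1 p.2 ∧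
      pt b p.1 p.2
        = (fG u Q p.1 p.2) ^ 2 / (Real.sin p.1 * Real.sin p.2) * pth (aG u Q) p.1 p.2) :
    ∀ p ∈ U, 0 < fG u Q p.1 p.2 ∧ ErnstEq (EE u Q b) p.1 p.2 := by
  intro p hp
  obtain ⟨t, θ⟩ := p
  obtain ⟨ht1, ht2⟩ := hUsub hp
  have hst : 0 < Real.sin t := Real.sin_pos_of_pos_of_lt_pi ht1.1 ht1.2
  have hsθ : 0 < Real.sin θ := Real.sin_pos_of_pos_of_lt_pi ht2.1 ht2.2
  have hfpos : ∀ q ∈ U, 0 < fG u Q q.1 q.2 := by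
    intro q hqU
    obtain ⟨h1, h2⟩ := hUsub hqU
    have hs2 : 0 < Real.sin q.2 := Real.sin_pos_of_pos_of_lt_pi h2.1 h2.2
    have e1 : 0 ≤ Q q.1 q.2 ^ 2 * Real.exp (u q.1 q.2) * Real.sin q.1 ^ 2 := by positivity
    have e2 : 0 < Real.exp (-(u q.1 q.2)) * Real.sin q.2 ^ 2 :=
      mul_pos (Real.exp_pos _) (pow_pos hs2 2)
    exact add_pos_of_nonneg_of_pos e1 e2
  have hfGs : ContDiffOn ℝ (⊤ : ℕ∞) (Function.uncurry (fG u Q)) U := by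
    have hrw : Function.uncurry (fG u Q) = fun q : ℝ × ℝ =>
        (Function.uncurry Q q) ^ 2 * Real.exp (Function.uncurry u q) * Real.sin q.1 ^ 2
          + Real.exp (-(Function.uncurry u q)) * Real.sin q.2 ^ 2 := rfl
    rw [hrw]
    exact (((hQ.pow 2).mul hu.exp).mul
        ((Real.contDiff_sin.comp contDiff_fst).contDiffOn.pow 2)).add
      ((hu.neg.exp).mul ((Real.contDiff_sin.comp contDiff_snd).contDiffOn.pow 2))
  -- first partials of fG, as functions on U
  have hft_all : ∀ (a₁ a₂ : ℝ), (a₁, a₂) ∈ U → pt (fG u Q) a₁ a₂ = (-1 * (Real.sin a₂) ^ 2) * ((Real.exp (-(u a₁ a₂))) * (pt u a₁ a₂)) + (2) * ((Real.sin a₁) * (Real.cos a₁) * (Real.exp (u a₁ a₂)) * (Q a₁ a₂) ^ 2) + (2) * ((Real.sin a₁) ^ 2 * (Real.exp (u a₁ a₂)) * (Q a₁ a₂) * (pt Q a₁ a₂)) + (Real.sin a₁) ^ 2 * (Real.exp (u a₁ a₂)) * (Q a₁ a₂) ^ 2 * (pt u a₁ a₂) := by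
    intro a₁ a₂ hqU
    have hu_t : HasDerivAt (fun s => u s a₂) (pt u a₁ a₂) a₁ := hasDerivAt_pt hU hu (by simp) hqU
    have hQ_t : HasDerivAt (fun s => Q s a₂) (pt Q a₁ a₂) a₁ := hasDerivAt_pt hU hQ (by simp) hqU
    have hD := (((hQ_t.pow 2).mul hu_t.exp).mul ((Real.hasDerivAt_sin a₁).pow 2)).add
      ((hu_t.neg.exp).mul_const (Real.sin a₂ ^ 2))
    have h2 : pt (fG u Q) a₁ a₂ = _ := hD.deriv
    rw [h2]; simp only [Pi.pow_apply, Pi.neg_apply, Pi.mul_apply, Pi.add_apply, Pi.div_apply]; ring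
  have hfq_all : ∀ (a₁ a₂ : ℝ), (a₁, a₂) ∈ U → pth (fG u Q) a₁ a₂ = (2) * ((Real.sin a₂) * (Real.cos a₂) * (Real.exp (-(u a₁ a₂)))) + (-1) * ((Real.sin a₂) ^ 2 * (Real.exp (-(u a₁ a₂))) * (pth u a₁ a₂)) + (2 * (Real.sin a₁) ^ 2) * ((Real.exp (u a₁ a₂)) * (Q a₁ a₂) * (pth Q a₁ a₂)) + ((Real.sin a₁) ^ 2) * ((Real.exp (u a₁ a₂)) * (Q a₁ a₂) ^ 2 * (pth u a₁ a₂)) := by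
    intro a₁ a₂ hqU
    have hu_q : HasDerivAt (fun x => u a₁ x) (pth u a₁ a₂) a₂ := hasDerivAt_pth hU hu (by simp) hqU
    have hQ_q : HasDerivAt (fun x => Q a₁ x) (pth Q a₁ a₂) a₂ := hasDerivAt_pth hU hQ (by simp) hqU
    have hD := (((hQ_q.pow 2).mul hu_q.exp).mul_const (Real.sin a₁ ^ 2)).add
      ((hu_q.neg.exp).mul ((Real.hasDerivAt_sin a₂).pow 2))
    have h2 : pth (fG u Q) a₁ a₂ = _ := hD.deriv
    rw [h2]; simp only [Pi.pow_apply, Pi.neg_apply, Pi.mul_apply, Pi.add_apply, Pi.div_apply]; ring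
  -- first partials of b, as functions on U
  have hbt_all : ∀ (a₁ a₂ : ℝ), (a₁, a₂) ∈ U →
      pt b a₁ a₂ = ((-2 * (Real.sin a₂) * (Real.cos a₂)) * ((Real.sin a₁) ^ 2 * (Real.exp (u a₁ a₂)) * (Real.exp (-(u a₁ a₂))) * (Q a₁ a₂)) + ((Real.sin a₂) ^ 2) * ((Real.sin a₁) ^ 2 * (Real.exp (u a₁ a₂)) * (Real.exp (-(u a₁ a₂))) * (pth Q a₁ a₂)) + (2 * (Real.sin a₂) ^ 2) * ((Real.sin a₁) ^ 2 * (Real.exp (u a₁ a₂)) * (Real.exp (-(u a₁ a₂))) * (Q a₁ a₂) * (pth u a₁ a₂)) + (-1) * ((Real.sin a₁) ^ 4 * (Real.exp (u a₁ a₂)) ^ 2 * (Q a₁ a₂) ^ 2 * (pth Q a₁ a₂))) / (Real.sin a₁ * Real.sin a₂) := by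
    intro a₁ a₂ hqU
    obtain ⟨h1, h2⟩ := hUsub hqU
    have hs1 : Real.sin a₁ ≠ 0 := (Real.sin_pos_of_pos_of_lt_pi h1.1 h1.2).ne'
    have hs2 : Real.sin a₂ ≠ 0 := (Real.sin_pos_of_pos_of_lt_pi h2.1 h2.2).ne'
    have hu_q : HasDerivAt (fun x => u a₁ x) (pth u a₁ a₂) a₂ := hasDerivAt_pth hU hu (by simp) hqU
    have hQ_q : HasDerivAt (fun x => Q a₁ x) (pth Q a₁ a₂) a₂ := hasDerivAt_pth hU hQ (by simp) hqU
    have hDf := (((hQ_q.pow 2).mul hu_q.exp).mul_const (Real.sin a₁ ^ 2)).add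
      ((hu_q.neg.exp).mul ((Real.hasDerivAt_sin a₂).pow 2))
    have hDN := (hQ_q.mul hu_q.exp).mul_const (Real.sin a₁ ^ 2)
    have hDa := hDN.div hDf (show (fun x => Q a₁ x ^ 2 * Real.exp (u a₁ x) * Real.sin a₁ ^ 2
        + Real.exp (-(u a₁ x)) * Real.sin a₂ ^ 2) a₂ ≠ 0 from (hfpos (a₁, a₂) hqU).ne')
    have h2 : pth (aG u Q) a₁ a₂ = _ := hDa.deriv
    rw [(hbeq (a₁, a₂) hqU).2, h2]
    simp only [Pi.pow_apply, Pi.neg_apply, Pi.mul_apply, Pi.add_apply, Pi.div_apply];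
    have hne : Q a₁ a₂ ^ 2 * Real.exp (u a₁ a₂) * Real.sin a₁ ^ 2
        + Real.exp (-(u a₁ a₂)) * Real.sin a₂ ^ 2 ≠ 0 := (hfpos (a₁, a₂) hqU).ne'
    have hfe : fG u Q a₁ a₂ = Q a₁ a₂ ^ 2 * Real.exp (u a₁ a₂) * Real.sin a₁ ^ 2
        + Real.exp (-(u a₁ a₂)) * Real.sin a₂ ^ 2 := rfl
    rw [hfe]
    field_simp
    ring
  have hbq_all : ∀ (a₁ a₂ : ℝ), (a₁, a₂) ∈ U →
      pth b a₁ a₂ = ((2 * (Real.sin a₁) * (Real.cos a₁)) * ((Real.sin a₂) ^ 2 * (Real.exp (u a₁ a₂)) * (Real.exp (-(u a₁ a₂))) * (Q a₁ a₂)) + ((Real.sin a₁) ^ 2) * ((Real.sin a₂) ^ 2 * (Real.exp (u a₁ a₂)) * (Real.exp (-(u a₁ a₂))) * (pt Q a₁ a₂)) + (2 * (Real.sin a₁) ^ 2) * ((Real.sin a₂) ^ 2 * (Real.exp (u a₁ a₂)) * (Real.exp (-(u a₁ a₂))) * (Q a₁ a₂) * (pt u a₁ a₂)) + (-1 * (Real.sin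 a₁) ^ 4) * ((Real.exp (u a₁ a₂)) ^ 2 * (Q a₁ a₂) ^ 2 * (pt Q a₁ a₂))) / (Real.sin a₁ * Real.sin a₂) := by
    intro a₁ a₂ hqU
    obtain ⟨h1, h2⟩ := hUsub hqU
    have hs1 : Real.sin a₁ ≠ 0 := (Real.sin_pos_of_pos_of_lt_pi h1.1 h1.2).ne'
    have hs2 : Real.sin a₂ ≠ 0 := (Real.sin_pos_of_pos_of_lt_pi h2.1 h2.2).ne'
    have hu_t : HasDerivAt (fun s => u s a₂) (pt u a₁ a₂) a₁ := hasDerivAt_pt hU hu (by simp) hqU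
    have hQ_t : HasDerivAt (fun s => Q s a₂) (pt Q a₁ a₂) a₁ := hasDerivAt_pt hU hQ (by simp) hqU
    have hDf := (((hQ_t.pow 2).mul hu_t.exp).mul ((Real.hasDerivAt_sin a₁).pow 2)).add
      ((hu_t.neg.exp).mul_const (Real.sin a₂ ^ 2))
    have hDN := (hQ_t.mul hu_t.exp).mul ((Real.hasDerivAt_sin a₁).pow 2)
    have hDa := hDN.div hDf (show (fun s => Q s a₂ ^ 2 * Real.exp (u s a₂) * Real.sin s ^ 2
        + Real.exp (-(u s a₂)) * Real.sin a₂ ^ 2) a₁ ≠ 0 from (hfpos (a₁, a₂) hqU).ne')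
    have h2 : pt (aG u Q) a₁ a₂ = _ := hDa.deriv
    rw [(hbeq (a₁, a₂) hqU).1, h2]
    simp only [Pi.pow_apply, Pi.neg_apply, Pi.mul_apply, Pi.add_apply, Pi.div_apply];
    have hne : Q a₁ a₂ ^ 2 * Real.exp (u a₁ a₂) * Real.sin a₁ ^ 2
        + Real.exp (-(u a₁ a₂)) * Real.sin a₂ ^ 2 ≠ 0 := (hfpos (a₁, a₂) hqU).ne'
    have hfe : fG u Q a₁ a₂ = Q a₁ a₂ ^ 2 * Real.exp (u a₁ a₂) * Real.sin a₁ ^ 2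
        + Real.exp (-(u a₁ a₂)) * Real.sin a₂ ^ 2 := rfl
    rw [hfe]
    field_simp
    ring
  -- point-level slice derivatives
  have hu_t : HasDerivAt (fun s => u s θ) (pt u t θ) t := hasDerivAt_pt hU hu (by simp) hp
  have hu_q : HasDerivAt (fun x => u t x) (pth u t θ) θ := hasDerivAt_pth hU hu (by simp) hp
  have hQ_t : HasDerivAt (fun s => Q s θ) (pt Q t θ) t := hasDerivAt_pt hU hQ (by simp) hp
  have hQ_q : HasDerivAt (fun x => Q t x) (pth Q t θ) θ := hasDerivAt_pth hU hQ (by simp) hp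
  have hut_t : HasDerivAt (fun s => pt u s θ) (pt (pt u) t θ) t :=
    hasDerivAt_pt hU (contDiffOn_pt hU hu) (by simp) hp
  have huq_t : HasDerivAt (fun s => pth u s θ) (pt (pth u) t θ) t :=
    hasDerivAt_pt hU (contDiffOn_pth hU hu) (by simp) hp
  have hQt_t : HasDerivAt (fun s => pt Q s θ) (pt (pt Q) t θ) t :=
    hasDerivAt_pt hU (contDiffOn_pt hU hQ) (by simp) hp
  have hQq_t : HasDerivAt (fun s => pth Q s θ) (pt (pth Q) t θ) t :=
    hasDerivAt_pt hU (contDiffOn_pth hU hQ) (by simp) hp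
  have hut_q : HasDerivAt (fun x => pt u t x) (pth (pt u) t θ) θ :=
    hasDerivAt_pth hU (contDiffOn_pt hU hu) (by simp) hp
  have huq_q : HasDerivAt (fun x => pth u t x) (pth (pth u) t θ) θ :=
    hasDerivAt_pth hU (contDiffOn_pth hU hu) (by simp) hp
  have hQt_q : HasDerivAt (fun x => pt Q t x) (pth (pt Q) t θ) θ :=
    hasDerivAt_pth hU (contDiffOn_pt hU hQ) (by simp) hp
  have hQq_q : HasDerivAt (fun x => pth Q t x) (pth (pth Q) t θ) θ :=
    hasDerivAt_pth hU (contDiffOn_pth hU hQ) (by simp) hp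
  have hmixu : pt (pth u) t θ = pth (pt u) t θ := pt_pth_symm hU hu hp
  have hmixQ : pt (pth Q) t θ = pth (pt Q) t θ := pt_pth_symm hU hQ hp
  -- second derivatives of fG
  have hev_ft : (fun s => pt (fG u Q) s θ) =ᶠ[nhds t] (fun s => (fun a₁ a₂ => (-1 * (Real.sin a₂) ^ 2) * ((Real.exp (-(u a₁ a₂))) * (pt u a₁ a₂)) + (2) * ((Real.sin a₁) * (Real.cos a₁) * (Real.exp (u a₁ a₂)) * (Q a₁ a₂) ^ 2) + (2) * ((Real.sin a₁) ^ 2 * (Real.exp (u a₁ a₂)) * (Q a₁ a₂) * (pt Q a₁ a₂)) + (Real.sin a₁) ^ 2 * (Real.exp (u a₁ a₂)) * (Q a₁ a₂) ^ 2 * (pt u a₁ a₂)) s θ) :=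
    evEq_t hU hp (pt (fG u Q)) (fun a₁ a₂ => (-1 * (Real.sin a₂) ^ 2) * ((Real.exp (-(u a₁ a₂))) * (pt u a₁ a₂)) + (2) * ((Real.sin a₁) * (Real.cos a₁) * (Real.exp (u a₁ a₂)) * (Q a₁ a₂) ^ 2) + (2) * ((Real.sin a₁) ^ 2 * (Real.exp (u a₁ a₂)) * (Q a₁ a₂) * (pt Q a₁ a₂)) + (Real.sin a₁) ^ 2 * (Real.exp (u a₁ a₂)) * (Q a₁ a₂) ^ 2 * (pt u a₁ a₂)) (fun q hq' => hft_all q.1 q.2 hq')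
  have hDftc := ((((((hu_t.neg.exp).mul hut_t).const_mul (-1 * (Real.sin θ) ^ 2)).add (((((Real.hasDerivAt_sin t).mul (Real.hasDerivAt_cos t)).mul (hu_t.exp)).mul (hQ_t.pow 2)).const_mul (2))).add ((((((Real.hasDerivAt_sin t).pow 2).mul (hu_t.exp)).mul hQ_t).mul hQt_t).const_mul (2))).add (((((Real.hasDerivAt_sin t).pow 2).mul (hu_t.exp)).mul (hQ_t.pow 2)).mul hut_t))
  have hDft : HasDerivAt (fun s => pt (fG u Q) s θ) _ t := hev_ft.hasDerivAt_iff.mpr hDftc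
  have hftt : pt (pt (fG u Q)) t θ = _ := hDft.deriv
  have hDft3 : HasDerivAt (fun s => pt (fG u Q) s θ) (pt (pt (fG u Q)) t θ) t :=
    hDft.differentiableAt.hasDerivAt
  have hev_fq : (fun x => pth (fG u Q) t x) =ᶠ[nhds θ] (fun x => (fun a₁ a₂ => (2) * ((Real.sin a₂) * (Real.cos a₂) * (Real.exp (-(u a₁ a₂)))) + (-1) * ((Real.sin a₂) ^ 2 * (Real.exp (-(u a₁ a₂))) * (pth u a₁ a₂)) + (2 * (Real.sin a₁) ^ 2) * ((Real.exp (u a₁ a₂)) * (Q a₁ a₂) * (pth Q a₁ a₂)) + ((Real.sin a₁) ^ 2) * ((Real.exp (u a₁ a₂)) * (Q a₁ a₂) ^ 2 * (pth u a₁ a₂))) t x) :=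
    evEq_q hU hp (pth (fG u Q)) (fun a₁ a₂ => (2) * ((Real.sin a₂) * (Real.cos a₂) * (Real.exp (-(u a₁ a₂)))) + (-1) * ((Real.sin a₂) ^ 2 * (Real.exp (-(u a₁ a₂))) * (pth u a₁ a₂)) + (2 * (Real.sin a₁) ^ 2) * ((Real.exp (u a₁ a₂)) * (Q a₁ a₂) * (pth Q a₁ a₂)) + ((Real.sin a₁) ^ 2) * ((Real.exp (u a₁ a₂)) * (Q a₁ a₂) ^ 2 * (pth u a₁ a₂))) (fun q hq' => hfq_all q.1 q.2 hq')
  have hDfqc := (((((((Real.hasDerivAt_sin θ).mul (Real.hasDerivAt_cos θ)).mul (hu_q.neg.exp)).const_mul (2)).add (((((Real.hasDerivAt_sin θ).pow 2).mul (hu_q.neg.exp)).mul huq_q).const_mul (-1))).add ((((hu_q.exp).mul hQ_q).mul hQq_q).const_mul (2 * (Real.sin t) ^ 2))).add ((((hu_q.exp).mul (hQ_q.pow 2)).mul huq_q).const_mul ((Real.sin t) ^ 2)))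
  have hDfq : HasDerivAt (fun x => pth (fG u Q) t x) _ θ := hev_fq.hasDerivAt_iff.mpr hDfqc
  have hfqq : pth (pth (fG u Q)) t θ = _ := hDfq.deriv
  have hDfq3 : HasDerivAt (fun x => pth (fG u Q) t x) (pth (pth (fG u Q)) t θ) θ :=
    hDfq.differentiableAt.hasDerivAt
  -- second derivatives of b
  have hev_bt : (fun s => pt b s θ) =ᶠ[nhds t]
      (fun s => (fun a₁ a₂ => ((-2 * (Real.sin a₂) * (Real.cos a₂)) * ((Real.sin a₁) ^ 2 * (Real.exp (u a₁ a₂)) * (Real.exp (-(u a₁ a₂))) * (Q a₁ a₂)) + ((Real.sin a₂) ^ 2) * ((Real.sin a₁) ^ 2 * (Real.exp (u a₁ a₂)) * (Real.exp (-(u a₁ a₂))) * (pth Q a₁ a₂)) + (2 * (Real.sin a₂) ^ 2) * ((Real.sin a₁) ^ 2 * (Real.exp (u a₁ a₂)) * (Real.exp (-(u a₁ a₂))) * (Q a₁ a₂) * (pth u a₁ a₂)) + (-1) * ((Real.sin a₁) ^ 4 * (Real.exp (u a₁ a₂)) ^ 2 * (Q a₁ a₂) ^ 2 * (pth Q a₁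 a₂))) / (Real.sin a₁ * Real.sin a₂)) s θ) :=
    evEq_t hU hp (pt b) (fun a₁ a₂ => ((-2 * (Real.sin a₂) * (Real.cos a₂)) * ((Real.sin a₁) ^ 2 * (Real.exp (u a₁ a₂)) * (Real.exp (-(u a₁ a₂))) * (Q a₁ a₂)) + ((Real.sin a₂) ^ 2) * ((Real.sin a₁) ^ 2 * (Real.exp (u a₁ a₂)) * (Real.exp (-(u a₁ a₂))) * (pth Q a₁ a₂)) + (2 * (Real.sin a₂) ^ 2) * ((Real.sin a₁) ^ 2 * (Real.exp (u a₁ a₂)) * (Real.exp (-(u a₁ a₂))) * (Q a₁ a₂) * (pth u a₁ a₂)) + (-1) * ((Real.sin a₁) ^ 4 * (Real.exp (u a₁ a₂)) ^ 2 * (Q a₁ a₂) ^ 2 * (pth Q a₁ a₂))) / (Real.sin a₁ * Real.sin a₂))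
      (fun q hq' => hbt_all q.1 q.2 hq')
  have hDbtc := ((((((((((Real.hasDerivAt_sin t).pow 2).mul (hu_t.exp)).mul (hu_t.neg.exp)).mul hQ_t).const_mul (-2 * (Real.sin θ) * (Real.cos θ))).add ((((((Real.hasDerivAt_sin t).pow 2).mul (hu_t.exp)).mul (hu_t.neg.exp)).mul hQq_t).const_mul ((Real.sin θ) ^ 2))).add (((((((Real.hasDerivAt_sin t).pow 2).mul (hu_t.exp)).mul (hu_t.neg.exp)).mul hQ_t).mul huq_t).const_mul (2 * (Real.sin θ) ^ 2))).add ((((((Real.hasDerivAt_sin t).pow 4).mul ((hu_t.exp).pow 2)).mul (hQ_t.pow 2)).mul hQq_t).const_mul (-1)))).div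
      ((Real.hasDerivAt_sin t).mul_const (Real.sin θ)) (mul_ne_zero hst.ne' hsθ.ne')
  have hDbt : HasDerivAt (fun s => pt b s θ) _ t := hev_bt.hasDerivAt_iff.mpr hDbtc
  have hbtt : pt (pt b) t θ = _ := hDbt.deriv
  have hDbt3 : HasDerivAt (fun s => pt b s θ) (pt (pt b) t θ) t :=
    hDbt.differentiableAt.hasDerivAt
  have hev_bq : (fun x => pth b t x) =ᶠ[nhds θ]
      (fun x => (fun a₁ a₂ => ((2 * (Real.sin a₁) * (Real.cos a₁)) * ((Real.sin a₂) ^ 2 * (Real.exp (u a₁ a₂)) * (Real.exp (-(u a₁ a₂))) * (Q a₁ a₂)) + ((Real.sin a₁) ^ 2) * ((Real.sin a₂) ^ 2 * (Real.exp (u a₁ a₂)) * (Real.exp (-(u a₁ a₂))) * (pt Q a₁ a₂)) + (2 * (Real.sin a₁) ^ 2) * ((Real.sin a₂) ^ 2 * (Real.exp (u a₁ a₂)) * (Real.exp (-(u a₁ a₂))) * (Q a₁ a₂) * (pt u a₁ a₂)) + (-1 * (Real.sin a₁) ^ 4) * ((Real.exp (u a₁ a₂)) ^ 2 * (Q a₁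 a₂) ^ 2 * (pt Q a₁ a₂))) / (Real.sin a₁ * Real.sin a₂)) t x) :=
    evEq_q hU hp (pth b) (fun a₁ a₂ => ((2 * (Real.sin a₁) * (Real.cos a₁)) * ((Real.sin a₂) ^ 2 * (Real.exp (u a₁ a₂)) * (Real.exp (-(u a₁ a₂))) * (Q a₁ a₂)) + ((Real.sin a₁) ^ 2) * ((Real.sin a₂) ^ 2 * (Real.exp (u a₁ a₂)) * (Real.exp (-(u a₁ a₂))) * (pt Q a₁ a₂)) + (2 * (Real.sin a₁) ^ 2) * ((Real.sin a₂) ^ 2 * (Real.exp (u a₁ a₂)) * (Real.exp (-(u a₁ a₂))) * (Q a₁ a₂) * (pt u a₁ a₂)) + (-1 * (Real.sin a₁) ^ 4) * ((Real.exp (u a₁ a₂)) ^ 2 * (Q a₁ a₂) ^ 2 * (pt Q a₁ a₂))) / (Real.sin a₁ * Real.sin a₂))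
      (fun q hq' => hbq_all q.1 q.2 hq')
  have hDbqc := ((((((((((Real.hasDerivAt_sin θ).pow 2).mul (hu_q.exp)).mul (hu_q.neg.exp)).mul hQ_q).const_mul (2 * (Real.sin t) * (Real.cos t))).add ((((((Real.hasDerivAt_sin θ).pow 2).mul (hu_q.exp)).mul (hu_q.neg.exp)).mul hQt_q).const_mul ((Real.sin t) ^ 2))).add (((((((Real.hasDerivAt_sin θ).pow 2).mul (hu_q.exp)).mul (hu_q.neg.exp)).mul hQ_q).mul hut_q).const_mul (2 * (Real.sin t) ^ 2))).add (((((hu_q.exp).pow 2).mul (hQ_q.pow 2)).mul hQt_q).const_mul (-1 * (Real.sin t) ^ 4)))).div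
      ((hasDerivAt_const θ (Real.sin t)).mul (Real.hasDerivAt_sin θ)) (mul_ne_zero hst.ne' hsθ.ne')
  have hDbq : HasDerivAt (fun x => pth b t x) _ θ := hev_bq.hasDerivAt_iff.mpr hDbqc
  have hbqq : pth (pth b) t θ = _ := hDbq.deriv
  have hDbq3 : HasDerivAt (fun x => pth b t x) (pth (pth b) t θ) θ :=
    hDbq.differentiableAt.hasDerivAt
  -- Gowdy equations at the point
  have hG1 : GowdyG1 u Q t θ := (heq (t, θ) hp).1
  have hG2 : GowdyG2 u Q t θ := (heq (t, θ) hp).2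
  unfold GowdyG1 at hG1
  unfold GowdyG2 at hG2
  have hexp2 : Real.exp (2 * u t θ) = Real.exp (u t θ) ^ 2 := by
    rw [two_mul, Real.exp_add, sq]
  rw [hexp2] at hG1
  simp only [Real.cot_eq_cos_div_sin] at hG1 hG2
  -- hypotheses for the key algebraic lemma
  have kf : fG u Q t θ = (Real.sin θ) ^ 2 * (Real.exp (-(u t θ))) + (Real.sin t) ^ 2 * (Real.exp (u t θ)) * (Q t θ) ^ 2 := by unfold fG; ring
  have kft : pt (fG u Q) t θ = -(Real.sin θ) ^ 2 * (Real.exp (-(u t θ))) * (pt u t θ) + 2 * (Real.sin t) * (Real.cos t) * (Real.exp (u t θ)) * (Q t θ) ^ 2 + 2 * (Real.sin t) ^ 2 * (Real.exp (u t θ)) * (Q t θ) * (pt Q t θ) + (Real.sin t) ^ 2 * (Real.exp (u t θ)) * (Q t θ) ^ 2 * (pt u t θ) := by rw [hft_all t θ hp]; ring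
  have kfq : pth (fG u Q) t θ = 2 * (Real.sin θ) * (Real.cos θ) * (Real.exp (-(u t θ))) - (Real.sin θ) ^ 2 * (Real.exp (-(u t θ))) * (pth u t θ) + 2 * (Real.sin t) ^ 2 * (Real.exp (u t θ)) * (Q t θ) * (pth Q t θ) + (Real.sin t) ^ 2 * (Real.exp (u t θ)) * (Q t θ) ^ 2 * (pth u t θ) := by rw [hfq_all t θ hp]; ring
  have kftt : pt (pt (fG u Q)) t θ = -(Real.sin θ) ^ 2 * (Real.exp (-(u t θ))) * (pt (pt u) t θ) + (Real.sin θ) ^ 2 * (Real.exp (-(u t θ))) * (pt u t θ) ^ 2 + 2 * (Real.cos t) ^ 2 * (Real.exp (u t θ)) * (Q t θ) ^ 2 + 8 * (Real.sin t) * (Real.cos t) * (Real.exp (u t θ)) * (Q t θ) * (pt Q t θ) + 4 * (Real.sin t) * (Real.cos t) * (Real.exp (u t θ)) * (Q t θ) ^ 2 * (pt u t θ) + 2 * (Real.sin t) ^ 2 * (Real.exp (u t θ)) * (pt Q t θ) ^ 2 + 2 * (Real.sin t) ^ 2 * (Real.exp (u t θ)) * (Q t θ) * (pt (pt Q) t θ)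 + 4 * (Real.sin t) ^ 2 * (Real.exp (u t θ)) * (Q t θ) * (pt u t θ) * (pt Q t θ) - 2 * (Real.sin t) ^ 2 * (Real.exp (u t θ)) * (Q t θ) ^ 2 + (Real.sin t) ^ 2 * (Real.exp (u t θ)) * (Q t θ) ^ 2 * (pt (pt u) t θ) + (Real.sin t) ^ 2 * (Real.exp (u t θ)) * (Q t θ) ^ 2 * (pt u t θ) ^ 2 := by rw [hftt]; simp only [Pi.pow_apply, Pi.neg_apply, Pi.mul_apply, Pi.add_apply, Pi.div_apply]; ring
  have kfqq : pth (pth (fG u Q)) t θ = 2 * (Real.cos θ) ^ 2 * (Real.exp (-(u t θ))) - 4 * (Real.sin θ) * (Real.cos θ) * (Real.exp (-(u t θ))) * (pth u t θ) - 2 * (Real.sin θ) ^ 2 * (Real.exp (-(u t θ))) - (Real.sin θ) ^ 2 * (Real.exp (-(u t θ))) * (pth (pth u) t θ) + (Real.sin θ) ^ 2 * (Real.exp (-(u t θ))) * (pth u t θ) ^ 2 + 2 * (Real.sin t) ^ 2 * (Real.exp (u t θ)) * (pth Q t θ) ^ 2 + 2 * (Real.sin t) ^ 2 * (Real.exp (u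 t θ)) * (Q t θ) * (pth (pth Q) t θ) + 4 * (Real.sin t) ^ 2 * (Real.exp (u t θ)) * (Q t θ) * (pth u t θ) * (pth Q t θ) + (Real.sin t) ^ 2 * (Real.exp (u t θ)) * (Q t θ) ^ 2 * (pth (pth u) t θ) + (Real.sin t) ^ 2 * (Real.exp (u t θ)) * (Q t θ) ^ 2 * (pth u t θ) ^ 2 := by rw [hfqq]; simp only [Pi.pow_apply, Pi.neg_apply, Pi.mul_apply, Pi.add_apply, Pi.div_apply]; ring
  have kbt : pt b t θ = -2 * (Real.sin t) ^ 2 * (Real.sin θ) * (Real.cos θ) * (Real.sin t)⁻¹ * (Real.sin θ)⁻¹ * (Real.exp (u t θ)) * (Real.exp (-(u t θ))) * (Q t θ) + (Real.sin t) ^ 2 * (Real.sin θ) ^ 2 * (Real.sin t)⁻¹ * (Real.sin θ)⁻¹ * (Real.exp (u t θ)) * (Real.exp (-(u t θ))) * (pth Q t θ) + 2 * (Real.sin t) ^ 2 * (Real.sin θ) ^ 2 * (Real.sin t)⁻¹ * (Real.sin θ)⁻¹ * (Real.exp (u t θ)) * (Real.exp (-(u t θ))) * (Q t θ) * (pth u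 t θ) - (Real.sin t) ^ 4 * (Real.sin t)⁻¹ * (Real.sin θ)⁻¹ * (Real.exp (u t θ)) ^ 2 * (Q t θ) ^ 2 * (pth Q t θ) := by rw [hbt_all t θ hp]; ring
  have kbq : pth b t θ = 2 * (Real.sin t) * (Real.cos t) * (Real.sin θ) ^ 2 * (Real.sin t)⁻¹ * (Real.sin θ)⁻¹ * (Real.exp (u t θ)) * (Real.exp (-(u t θ))) * (Q t θ) + (Real.sin t) ^ 2 * (Real.sin θ) ^ 2 * (Real.sin t)⁻¹ * (Real.sin θ)⁻¹ * (Real.exp (u t θ)) * (Real.exp (-(u t θ))) * (pt Q t θ) + 2 * (Real.sin t) ^ 2 * (Real.sin θ) ^ 2 * (Real.sin t)⁻¹ * (Real.sin θ)⁻¹ * (Real.exp (u t θ)) * (Real.exp (-(u t θ))) * (Q t θ) * (pt u t θ) - (Real.sin t) ^ 4 * (Real.sin t)⁻¹ * (Real.sin θ)⁻¹ * (Real.exp (u t θ)) ^ 2 * (Q t θ) ^ 2 * (pt Q t θ) := by rw [hbq_all t θ hp]; ring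
  have kbtt : pt (pt b) t θ = -2 * (Real.sin t) ^ 2 * (Real.cos t) * (Real.sin θ) ^ 2 * (Real.cos θ) * (Real.sin t)⁻¹ ^ 2 * (Real.sin θ)⁻¹ ^ 2 * (Real.exp (u t θ)) * (Real.exp (-(u t θ))) * (Q t θ) + (Real.sin t) ^ 2 * (Real.cos t) * (Real.sin θ) ^ 3 * (Real.sin t)⁻¹ ^ 2 * (Real.sin θ)⁻¹ ^ 2 * (Real.exp (u t θ)) * (Real.exp (-(u t θ))) * (pth Q t θ) + 2 * (Real.sin t) ^ 2 * (Real.cos t) * (Real.sin θ) ^ 3 * (Real.sin t)⁻¹ ^ 2 * (Real.sin θ)⁻¹ ^ 2 * (Real.exp (u t θ)) * (Real.exp (-(u t θ))) * (Q t θ) * (pth u t θ) - 2 * (Real.sin t) ^ 3 * (Real.sin θ) ^ 2 * (Real.cos θ) * (Real.sin t)⁻¹ ^ 2 * (Real.sin θ)⁻¹ ^ 2 * (Real.exp (u t θ)) * (Real.exp (-(u t θ))) * (pt Q t θ) + (Real.sin t) ^ 3 * (Real.sin θ) ^ 3 * (Real.sin t)⁻¹ ^ 2 * (Real.sin θ)⁻¹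 ^ 2 * (Real.exp (u t θ)) * (Real.exp (-(u t θ))) * (pt (pth Q) t θ) + 2 * (Real.sin t) ^ 3 * (Real.sin θ) ^ 3 * (Real.sin t)⁻¹ ^ 2 * (Real.sin θ)⁻¹ ^ 2 * (Real.exp (u t θ)) * (Real.exp (-(u t θ))) * (pth u t θ) * (pt Q t θ) + 2 * (Real.sin t) ^ 3 * (Real.sin θ) ^ 3 * (Real.sin t)⁻¹ ^ 2 * (Real.sin θ)⁻¹ ^ 2 * (Real.exp (u t θ)) * (Real.exp (-(u t θ))) * (Q t θ) * (pt (pth u) t θ) - 3 * (Real.sin t) ^ 4 * (Real.cos t) * (Real.sin θ) * (Real.sin t)⁻¹ ^ 2 * (Real.sin θ)⁻¹ ^ 2 * (Real.exp (u t θ)) ^ 2 * (Q t θ) ^ 2 * (pth Q t θ) - 2 * (Real.sin t) ^ 5 * (Real.sin θ) * (Real.sin t)⁻¹ ^ 2 * (Real.sin θ)⁻¹ ^ 2 * (Real.exp (u t θ)) ^ 2 * (Q t θ) * (pt Q t θ) * (pth Q t θ) - (Real.sin t) ^ 5 * (Real.sin θ) * (Real.sin t)⁻¹ ^ 2 * (Real.sin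 θ)⁻¹ ^ 2 * (Real.exp (u t θ)) ^ 2 * (Q t θ) ^ 2 * (pt (pth Q) t θ) - 2 * (Real.sin t) ^ 5 * (Real.sin θ) * (Real.sin t)⁻¹ ^ 2 * (Real.sin θ)⁻¹ ^ 2 * (Real.exp (u t θ)) ^ 2 * (Q t θ) ^ 2 * (pt u t θ) * (pth Q t θ) := by rw [hbtt]; simp only [Pi.pow_apply, Pi.neg_apply, Pi.mul_apply, Pi.add_apply, Pi.div_apply]; ring
  have kbqq : pth (pth b) t θ = 2 * (Real.sin t) ^ 2 * (Real.cos t) * (Real.sin θ) ^ 2 * (Real.cos θ) * (Real.sin t)⁻¹ ^ 2 * (Real.sin θ)⁻¹ ^ 2 * (Real.exp (u t θ)) * (Real.exp (-(u t θ))) * (Q t θ) + 2 * (Real.sin t) ^ 2 * (Real.cos t) * (Real.sin θ) ^ 3 * (Real.sin t)⁻¹ ^ 2 * (Real.sin θ)⁻¹ ^ 2 * (Real.exp (u t θ)) * (Real.exp (-(u t θ))) * (pth Q t θ) + (Real.sin t) ^ 3 * (Real.sin θ) ^ 2 * (Real.cos θ) * (Real.sin t)⁻¹ ^ 2 * (Real.sin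 θ)⁻¹ ^ 2 * (Real.exp (u t θ)) * (Real.exp (-(u t θ))) * (pt Q t θ) + 2 * (Real.sin t) ^ 3 * (Real.sin θ) ^ 2 * (Real.cos θ) * (Real.sin t)⁻¹ ^ 2 * (Real.sin θ)⁻¹ ^ 2 * (Real.exp (u t θ)) * (Real.exp (-(u t θ))) * (Q t θ) * (pt u t θ) + (Real.sin t) ^ 3 * (Real.sin θ) ^ 3 * (Real.sin t)⁻¹ ^ 2 * (Real.sin θ)⁻¹ ^ 2 * (Real.exp (u t θ)) * (Real.exp (-(u t θ))) * (pt (pth Q) t θ) + 2 * (Real.sin t) ^ 3 * (Real.sin θ) ^ 3 * (Real.sin t)⁻¹ ^ 2 * (Real.sin θ)⁻¹ ^ 2 * (Real.exp (u t θ)) * (Real.exp (-(u t θ))) * (pt u t θ) * (pth Q t θ) + 2 * (Real.sin t) ^ 3 * (Real.sin θ) ^ 3 * (Real.sin t)⁻¹ ^ 2 * (Real.sin θ)⁻¹ ^ 2 * (Real.exp (u t θ)) * (Real.exp (-(u t θ))) * (Q t θ) * (pt (pth u) t θ) + (Real.sin t) ^ 5 * (Real.cos θ) * (Real.sin t)⁻¹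 ^ 2 * (Real.sin θ)⁻¹ ^ 2 * (Real.exp (u t θ)) ^ 2 * (Q t θ) ^ 2 * (pt Q t θ) - 2 * (Real.sin t) ^ 5 * (Real.sin θ) * (Real.sin t)⁻¹ ^ 2 * (Real.sin θ)⁻¹ ^ 2 * (Real.exp (u t θ)) ^ 2 * (Q t θ) * (pt Q t θ) * (pth Q t θ) - (Real.sin t) ^ 5 * (Real.sin θ) * (Real.sin t)⁻¹ ^ 2 * (Real.sin θ)⁻¹ ^ 2 * (Real.exp (u t θ)) ^ 2 * (Q t θ) ^ 2 * (pt (pth Q) t θ) - 2 * (Real.sin t) ^ 5 * (Real.sin θ) * (Real.sin t)⁻¹ ^ 2 * (Real.sin θ)⁻¹ ^ 2 * (Real.exp (u t θ)) ^ 2 * (Q t θ) ^ 2 * (pth u t θ) * (pt Q t θ) := by rw [hbqq, ← hmixu, ← hmixQ]; simp only [Pi.pow_apply, Pi.neg_apply, Pi.mul_apply, Pi.add_apply, Pi.div_apply]; ring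
  have kutt : pt (pt u) t θ = 2 + (pth (pth u) t θ) + (Real.cos θ) * (Real.sin θ)⁻¹ * (pth u t θ) - (Real.cos t) * (Real.sin t)⁻¹ * (pt u t θ) - (Real.sin t) ^ 2 * (Real.sin θ)⁻¹ ^ 2 * (Real.exp (u t θ)) ^ 2 * (pth Q t θ) ^ 2 + (Real.sin t) ^ 2 * (Real.sin θ)⁻¹ ^ 2 * (Real.exp (u t θ)) ^ 2 * (pt Q t θ) ^ 2 := by linear_combination -hG1
  have kQtt : pt (pt Q) t θ = (pth (pth Q) t θ) + 2 * (pth u t θ) * (pth Q t θ) - 2 * (pt u t θ) * (pt Q t θ) - (Real.cos θ) * (Real.sin θ)⁻¹ * (pth Q t θ) - 3 * (Real.cos t) * (Real.sin t)⁻¹ * (pt Q t θ) := by linear_combination -hG2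
  obtain ⟨K1, K2⟩ := ernst_key (Real.sin t) (Real.cos t) (Real.sin θ) (Real.cos θ)
    (Real.sin t)⁻¹ (Real.sin θ)⁻¹ (Real.exp (u t θ)) (Real.exp (-(u t θ))) (Q t θ)
    (pt u t θ) (pth u t θ) (pt Q t θ) (pth Q t θ)
    (pt (pt u) t θ) (pt (pth u) t θ) (pth (pth u) t θ)
    (pt (pt Q) t θ) (pt (pth Q) t θ) (pth (pth Q) t θ)
    (fG u Q t θ) (pt (fG u Q) t θ) (pth (fG u Q) t θ)
    (pt (pt (fG u Q)) t θ) (pth (pth (fG u Q)) t θ)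
    (pt b t θ) (pth b t θ) (pt (pt b) t θ) (pth (pth b) t θ)
    (mul_inv_cancel₀ hst.ne') (mul_inv_cancel₀ hsθ.ne')
    (by rw [← Real.exp_add]; simp)
    kf kft kfq kftt kfqq kbt kbq kbtt kbqq kutt kQtt
  -- complex derivatives
  have hEc_all : ∀ (a₁ a₂ : ℝ), (a₁, a₂) ∈ U → ptc (EE u Q b) a₁ a₂
      = ((pt (fG u Q) a₁ a₂ : ℂ) + Complex.I * (pt b a₁ a₂ : ℂ)) := by
    intro a₁ a₂ hqU
    have h1 : HasDerivAt (fun s => fG u Q s a₂) (pt (fG u Q) a₁ a₂) a₁ :=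
      hasDerivAt_pt hU hfGs (by simp) hqU
    have h2 : HasDerivAt (fun s => b s a₂) (pt b a₁ a₂) a₁ :=
      hasDerivAt_pt hU hb (by norm_num) hqU
    exact ((h1.ofReal_comp).add ((h2.ofReal_comp).const_mul Complex.I)).deriv
  have hEq_all : ∀ (a₁ a₂ : ℝ), (a₁, a₂) ∈ U → pthc (EE u Q b) a₁ a₂
      = ((pth (fG u Q) a₁ a₂ : ℂ) + Complex.I * (pth b a₁ a₂ : ℂ)) := by
    intro a₁ a₂ hqU
    have h1 : HasDerivAt (fun x => fG u Q a₁ x) (pth (fG u Q) a₁ a₂) a₂ :=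
      hasDerivAt_pth hU hfGs (by simp) hqU
    have h2 : HasDerivAt (fun x => b a₁ x) (pth b a₁ a₂) a₂ :=
      hasDerivAt_pth hU hb (by norm_num) hqU
    exact ((h1.ofReal_comp).add ((h2.ofReal_comp).const_mul Complex.I)).deriv
  have hev_Et : (fun s => ptc (EE u Q b) s θ) =ᶠ[nhds t]
      (fun s => (fun a₁ a₂ => ((pt (fG u Q) a₁ a₂ : ℂ) + Complex.I * (pt b a₁ a₂ : ℂ))) s θ) :=
    evEq_t hU hp (ptc (EE u Q b))
      (fun a₁ a₂ => ((pt (fG u Q) a₁ a₂ : ℂ) + Complex.I * (pt b a₁ a₂ : ℂ)))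
      (fun q hq' => hEc_all q.1 q.2 hq')
  have hE2t : ptc (ptc (EE u Q b)) t θ
      = ((pt (pt (fG u Q)) t θ : ℂ) + Complex.I * (pt (pt b) t θ : ℂ)) :=
    (hev_Et.hasDerivAt_iff.mpr
      ((hDft3.ofReal_comp).add ((hDbt3.ofReal_comp).const_mul Complex.I))).deriv
  have hev_Eq : (fun x => pthc (EE u Q b) t x) =ᶠ[nhds θ]
      (fun x => (fun a₁ a₂ => ((pth (fG u Q) a₁ a₂ : ℂ) + Complex.I * (pth b a₁ a₂ : ℂ))) t x) :=
    evEq_q hU hp (pthc (EE u Q b))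
      (fun a₁ a₂ => ((pth (fG u Q) a₁ a₂ : ℂ) + Complex.I * (pth b a₁ a₂ : ℂ)))
      (fun q hq' => hEq_all q.1 q.2 hq')
  have hE2q : pthc (pthc (EE u Q b)) t θ
      = ((pth (pth (fG u Q)) t θ : ℂ) + Complex.I * (pth (pth b) t θ : ℂ)) :=
    (hev_Eq.hasDerivAt_iff.mpr
      ((hDfq3.ofReal_comp).add ((hDbq3.ofReal_comp).const_mul Complex.I))).deriv
  refine ⟨hfpos (t, θ) hp, ?_⟩
  show ErnstEq (EE u Q b) t θ
  unfold ErnstEq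
  have hre : (EE u Q b t θ).re = fG u Q t θ := by simp [EE]
  rw [hE2t, hE2q, hEc_all t θ hp, hEq_all t θ hp, hre]
  simp only [Real.cot_eq_cos_div_sin]
  have K1c := congrArg (Complex.ofReal) K1
  have K2c := congrArg (Complex.ofReal) K2
  push_cast at K1c K2c
  push_cast
  linear_combination K1c + Complex.I * K2c
    + ((pt b t θ : ℂ) ^ 2 - (pth b t θ : ℂ) ^ 2) * Complex.I_sq
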